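/- arXiv:2007.12221 — 2 statements merged into one kernel-verified Lean document; each statement's English description precedes it below -/
import Mathlib

section
/- In a skew tableau whose entries are weakly decreasing along each row and strictly decreasing down each column, the condition (ST-3) — for every vertical line and every ℓ, the number of entries ℓ+1 strictly to the left of the line is at most the number of entries ℓ strictly to the left of the line — is equivalent to the condition (ST-3') — for every row R and every ℓ, the number of entries ℓ+1 in row R or below is at most the number of entries ℓ strictly below row R. -/
/-- A sequence `ℕ → ℕ` is a partition if it is weakly decreasing and eventually zero.
`lam r` is the length of the `r`-th row (rows indexed from the top starting at `0`). -/
def IsPartition (lam : ℕ → ℕ) : Prop :=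
  Antitone lam ∧ ∃ N, ∀ i, N ≤ i → lam i = 0

/-- The box in row `r`, column `c` (both `0`-indexed) belongs to the skew diagram `β∖γ`. -/
def InSkew (β γ : ℕ → ℕ) (r c : ℕ) : Prop :=
  γ r ≤ c ∧ c < β r


lemma core (N : ℕ) (s m l : ℕ → ℕ) (hsm : ∀ r, s r ≤ m r) (hml : ∀ r, m r ≤ l r)
    (hlm : ∀ r, l (r+1) ≤ m r) (hms : ∀ r, m (r+1) ≤ s r)
    (hv : ∀ r, N ≤ r → l r = 0) :
    (∀ c, ∑ r ∈ Finset.range N, (min (m r) c - s r)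
        ≤ ∑ r ∈ Finset.range N, (min (l r) c - m r)) ↔
    (∀ R, ∑ r ∈ Finset.Ico R N, (m r - s r)
        ≤ ∑ r ∈ Finset.Ico (R+1) N, (l r - m r)) := by
  have hman : Antitone m := antitone_nat_of_succ_le fun r => (hms r).trans (hsm r)
  have hsan : Antitone s := antitone_nat_of_succ_le fun r => (hsm (r+1)).trans (hms r)
  have hlan : Antitone l := antitone_nat_of_succ_le fun r => (hlm r).trans (hml r)
  have hsv : ∀ r, N ≤ r → s r = 0 := fun r h => by
    have h1 := hv r h; have h2 := hsm r; have h3 := hml r; omega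
  constructor
  · intro h R
    rcases le_or_gt N R with hRN | hRN
    · rw [Finset.Ico_eq_empty (by omega)]; simp
    have key := h (m R)
    have e1 : ∑ r ∈ Finset.range N, (min (m r) (m R) - s r)
        = ∑ r ∈ Finset.Ico R N, (m r - s r) := by
      rw [Finset.range_eq_Ico, ← Finset.sum_Ico_consecutive _ (Nat.zero_le R) hRN.le]
      have hz : ∑ r ∈ Finset.Ico 0 R, (min (m r) (m R) - s r) = 0 :=
        Finset.sum_eq_zero fun r hr => by
          obtain ⟨-, hrR⟩ := Finset.mem_Ico.mp hr
          have h1 : m R ≤ s r := (hman (by omega : r + 1 ≤ R)).trans (hms r)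
          have h2 : min (m r) (m R) ≤ m R := min_le_right _ _
          omega
      rw [hz, zero_add]
      exact Finset.sum_congr rfl fun r hr => by
        rw [min_eq_left (hman (Finset.mem_Ico.mp hr).1)]
    have e2 : ∑ r ∈ Finset.range N, (min (l r) (m R) - m r)
        = ∑ r ∈ Finset.Ico (R+1) N, (l r - m r) := by
      rw [Finset.range_eq_Ico, ← Finset.sum_Ico_consecutive _ (Nat.zero_le (R+1)) (by omega)]
      have hz : ∑ r ∈ Finset.Ico 0 (R+1), (min (l r) (m R) - m r) = 0 :=
        Finset.sum_eq_zero fun r hr => by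
          obtain ⟨-, hrR⟩ := Finset.mem_Ico.mp hr
          have h1 : m R ≤ m r := hman (by omega)
          have h2 : min (l r) (m R) ≤ m R := min_le_right _ _
          omega
      rw [hz, zero_add]
      exact Finset.sum_congr rfl fun r hr => by
        obtain ⟨hr1, -⟩ := Finset.mem_Ico.mp hr
        obtain ⟨r', rfl⟩ : ∃ r', r = r' + 1 := ⟨r - 1, by omega⟩
        rw [min_eq_left ((hlm r').trans (hman (by omega : R ≤ r')))]
    rw [e1, e2] at key
    exact key
  · intro h c
    rcases Nat.eq_zero_or_pos c with rfl | hc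
    · simp
    have hex : ∃ R, s R < c := ⟨N, by rw [hsv N le_rfl]; omega⟩
    have hsR : s (Nat.find hex) < c := Nat.find_spec hex
    set R := Nat.find hex with hRdef
    have hlt : ∀ r, r < R → c ≤ s r := fun r hr => le_of_not_gt (Nat.find_min hex hr)
    rcases le_or_gt N R with hRN | hRN
    · have hz : ∑ r ∈ Finset.range N, (min (m r) c - s r) = 0 :=
        Finset.sum_eq_zero fun r hr => by
          have h1 : c ≤ s r := hlt r (lt_of_lt_of_le (Finset.mem_range.mp hr) hRN)
          have h2 : min (m r) c ≤ c := min_le_right _ _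
          omega
      rw [hz]; exact Nat.zero_le _
    have hLHS : ∑ r ∈ Finset.range N, (min (m r) c - s r)
        = (min (m R) c - s R) + ∑ r ∈ Finset.Ico (R+1) N, (m r - s r) := by
      rw [Finset.range_eq_Ico, ← Finset.sum_Ico_consecutive _ (Nat.zero_le R) hRN.le]
      have hz : ∑ r ∈ Finset.Ico 0 R, (min (m r) c - s r) = 0 :=
        Finset.sum_eq_zero fun r hr => by
          have h1 : c ≤ s r := hlt r (Finset.mem_Ico.mp hr).2
          have h2 : min (m r) c ≤ c := min_le_right _ _
          omega
      rw [hz, zero_add, Finset.sum_eq_sum_Ico_succ_bot hRN]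
      congr 1
      exact Finset.sum_congr rfl fun r hr => by
        obtain ⟨hr1, -⟩ := Finset.mem_Ico.mp hr
        obtain ⟨r', rfl⟩ : ∃ r', r = r' + 1 := ⟨r - 1, by omega⟩
        have h1 : m (r' + 1) ≤ s R := (hms r').trans (hsan (by omega : R ≤ r'))
        rw [min_eq_left (by omega)]
    have hRHS0 : ∑ r ∈ Finset.range N, (min (l r) c - m r)
        = ∑ r ∈ Finset.Ico R N, (min (l r) c - m r) := by
      rw [Finset.range_eq_Ico, ← Finset.sum_Ico_consecutive _ (Nat.zero_le R) hRN.le]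
      have hz : ∑ r ∈ Finset.Ico 0 R, (min (l r) c - m r) = 0 :=
        Finset.sum_eq_zero fun r hr => by
          have h1 : c ≤ s r := hlt r (Finset.mem_Ico.mp hr).2
          have h2 : min (l r) c ≤ c := min_le_right _ _
          have h3 := hsm r
          omega
      rw [hz, zero_add]
    rw [hLHS, hRHS0]
    rcases lt_or_ge (l (R+1)) c with hB | hB
    · -- case (i): l (R+1) < c
      have hRHS : ∑ r ∈ Finset.Ico (R+1) N, (l r - m r)
          ≤ ∑ r ∈ Finset.Ico R N, (min (l r) c - m r) := by
        rw [Finset.sum_eq_sum_Ico_succ_bot hRN]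
        have he : ∑ r ∈ Finset.Ico (R+1) N, (min (l r) c - m r)
            = ∑ r ∈ Finset.Ico (R+1) N, (l r - m r) :=
          Finset.sum_congr rfl fun r hr => by
            have h1 : l r ≤ l (R+1) := hlan (Finset.mem_Ico.mp hr).1
            rw [min_eq_left (by omega)]
        rw [he]
        exact Nat.le_add_left _ _
      have hkey := h R
      rw [Finset.sum_eq_sum_Ico_succ_bot hRN] at hkey
      have h2 : min (m R) c - s R ≤ m R - s R := by
        have := min_le_left (m R) c; omega
      exact le_trans (Nat.add_le_add_right h2 _) (le_trans hkey hRHS)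
    · -- case (ii): c ≤ l (R+1)
      have hR1N : R + 1 < N := by
        by_contra hcon
        push_neg at hcon
        have := hv (R+1) hcon
        omega
      have hkey := h (R+1)
      rw [Finset.sum_eq_sum_Ico_succ_bot hR1N] at hkey
      rw [Finset.sum_eq_sum_Ico_succ_bot hRN, Finset.sum_eq_sum_Ico_succ_bot hR1N,
        Finset.sum_eq_sum_Ico_succ_bot hR1N]
      have hSS : ∑ r ∈ Finset.Ico (R+1+1) N, (min (l r) c - m r)
          = ∑ r ∈ Finset.Ico (R+1+1) N, (l r - m r) :=
        Finset.sum_congr rfl fun r hr => by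
          have h1 : l r ≤ l (R+2) := hlan (Finset.mem_Ico.mp hr).1
          have h2 : l (R+2) ≤ m (R+1) := hlm (R+1)
          have h3 : m (R+1) ≤ s R := hms R
          rw [min_eq_left (by omega)]
      rw [hSS]
      have h1 : c ≤ m R := hB.trans (hlm R)
      rw [min_eq_right h1, min_eq_right hB]
      have h4 : c - s R ≤ c - m (R+1) := Nat.sub_le_sub_left (hms R) c
      exact le_trans (Nat.add_le_add h4 hkey) (Nat.le_add_left _ _)


def Fb (β γ : ℕ → ℕ) (T : ℕ × ℕ → ℕ) (k r : ℕ) : ℕ :=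
  γ r + ((Finset.Ico (γ r) (β r)).filter fun c => k ≤ T (r, c)).card

lemma filter_Ico_eq (a b : ℕ) (p : ℕ → Prop) [DecidablePred p]
    (h : ∀ x y, a ≤ x → x ≤ y → y < b → p y → p x) :
    (Finset.Ico a b).filter p = Finset.Ico a (a + ((Finset.Ico a b).filter p).card) := by
  rcases ((Finset.Ico a b).filter p).eq_empty_or_nonempty with he | hne
  · rw [he]; simp
  obtain ⟨M, hMmem, hMle⟩ :
      ∃ M ∈ (Finset.Ico a b).filter p, ∀ x ∈ (Finset.Ico a b).filter p, x ≤ M :=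
    ⟨_, Finset.max'_mem _ hne, fun x hx => Finset.le_max' _ x hx⟩
  obtain ⟨hMIco, hpM⟩ := Finset.mem_filter.mp hMmem
  obtain ⟨haM, hMb⟩ := Finset.mem_Ico.mp hMIco
  have hSeq : (Finset.Ico a b).filter p = Finset.Ico a (M + 1) := by
    ext x
    simp only [Finset.mem_filter, Finset.mem_Ico]
    constructor
    · rintro ⟨⟨h1, h2⟩, h3⟩
      exact ⟨h1, Nat.lt_succ_of_le
        (hMle x (Finset.mem_filter.mpr ⟨Finset.mem_Ico.mpr ⟨h1, h2⟩, h3⟩))⟩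
    · rintro ⟨h1, h2⟩
      have hxm : x ≤ M := Nat.lt_succ_iff.mp h2
      exact ⟨⟨h1, lt_of_le_of_lt hxm hMb⟩, h x M h1 hxm hMb hpM⟩
  rw [hSeq, Nat.card_Ico]
  congr 1
  omega

lemma gamma_le_Fb (β γ : ℕ → ℕ) (T : ℕ × ℕ → ℕ) (k r : ℕ) : γ r ≤ Fb β γ T k r :=
  Nat.le_add_right _ _

lemma mem_Fb {β γ : ℕ → ℕ} {T : ℕ × ℕ → ℕ}
    (hrow : ∀ r c c', InSkew β γ r c → InSkew β γ r c' → c ≤ c' → T (r, c') ≤ T (r, c))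
    (k r c : ℕ) :
    (InSkew β γ r c ∧ k ≤ T (r, c)) ↔ (γ r ≤ c ∧ c < Fb β γ T k r) := by
  have h := filter_Ico_eq (γ r) (β r) (fun x => k ≤ T (r, x))
    (fun x y hx hxy hy hpy =>
      le_trans hpy (hrow r x y ⟨hx, lt_of_le_of_lt hxy hy⟩ ⟨le_trans hx hxy, hy⟩ hxy))
  constructor
  · rintro ⟨hin, hT⟩
    have hmem : c ∈ (Finset.Ico (γ r) (β r)).filter (fun x => k ≤ T (r, x)) :=
      Finset.mem_filter.mpr ⟨Finset.mem_Ico.mpr ⟨hin.1, hin.2⟩, hT⟩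
    rw [h] at hmem
    exact Finset.mem_Ico.mp hmem
  · rintro ⟨h1, h2⟩
    have hmem : c ∈ Finset.Ico (γ r)
        (γ r + ((Finset.Ico (γ r) (β r)).filter fun x => k ≤ T (r, x)).card) :=
      Finset.mem_Ico.mpr ⟨h1, h2⟩
    rw [← h] at hmem
    obtain ⟨hIco, hT⟩ := Finset.mem_filter.mp hmem
    exact ⟨⟨h1, (Finset.mem_Ico.mp hIco).2⟩, hT⟩

lemma eq_Fb {β γ : ℕ → ℕ} {T : ℕ × ℕ → ℕ}
    (hrow : ∀ r c c', InSkew β γ r c → InSkew β γ r c' → c ≤ c' → T (r, c') ≤ T (r, c))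
    (k r c : ℕ) :
    (InSkew β γ r c ∧ T (r, c) = k) ↔ (Fb β γ T (k+1) r ≤ c ∧ c < Fb β γ T k r) := by
  constructor
  · rintro ⟨hin, hT⟩
    have h1 := (mem_Fb hrow k r c).mp ⟨hin, hT.ge⟩
    refine ⟨?_, h1.2⟩
    by_contra hcon
    push_neg at hcon
    have h2 := (mem_Fb hrow (k+1) r c).mpr ⟨h1.1, hcon⟩
    omega
  · rintro ⟨h1, h2⟩
    have hγc : γ r ≤ c := le_trans (gamma_le_Fb β γ T (k+1) r) h1
    obtain ⟨hin, hk⟩ := (mem_Fb hrow k r c).mpr ⟨hγc, h2⟩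
    refine ⟨hin, ?_⟩
    by_contra hne
    have hk1 : k + 1 ≤ T (r, c) := by omega
    have h3 := (mem_Fb hrow (k+1) r c).mp ⟨hin, hk1⟩
    omega

lemma Fb_mono (β γ : ℕ → ℕ) (T : ℕ × ℕ → ℕ) (k r : ℕ) :
    Fb β γ T (k+1) r ≤ Fb β γ T k r := by
  unfold Fb
  refine Nat.add_le_add_left (Finset.card_le_card fun x hx => ?_) _
  simp only [Finset.mem_filter, Finset.mem_Ico] at hx ⊢
  omega

lemma Fb_strip {β γ : ℕ → ℕ} {T : ℕ × ℕ → ℕ}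
    (hβa : Antitone β) (hγa : Antitone γ)
    (hrow : ∀ r c c', InSkew β γ r c → InSkew β γ r c' → c ≤ c' → T (r, c') ≤ T (r, c))
    (hcol : ∀ r r' c, InSkew β γ r c → InSkew β γ r' c → r < r' → T (r', c) < T (r, c))
    (k r : ℕ) :
    Fb β γ T k (r+1) ≤ Fb β γ T (k+1) r := by
  rcases Nat.eq_or_lt_of_le (gamma_le_Fb β γ T k (r+1)) with heq | hlt
  · exact heq ▸ le_trans (hγa (Nat.le_succ r)) (gamma_le_Fb β γ T (k+1) r)
  · set c := Fb β γ T k (r+1) - 1 with hcdef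
    have hc : γ (r+1) ≤ c ∧ c < Fb β γ T k (r+1) := by omega
    obtain ⟨hin, hk⟩ := (mem_Fb hrow k (r+1) c).mpr hc
    have hcF : c < Fb β γ T (k+1) r := by
      rcases lt_or_ge c (γ r) with hcase | hcase
      · exact lt_of_lt_of_le hcase (gamma_le_Fb β γ T (k+1) r)
      · have hin' : InSkew β γ r c := ⟨hcase, lt_of_lt_of_le hin.2 (hβa (Nat.le_succ r))⟩
        have hT := hcol r (r+1) c hin' hin (Nat.lt_succ_self r)
        exact ((mem_Fb hrow (k+1) r c).mp ⟨hin', by omega⟩).2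
    omega

lemma ncard_eq (P : ℕ × ℕ → Prop) (A : Finset ℕ) (u v : ℕ → ℕ)
    (hP : ∀ a b : ℕ, P (a, b) ↔ (a ∈ A ∧ u a ≤ b ∧ b < v a)) :
    Set.ncard {x : ℕ × ℕ | P x} = ∑ r ∈ A, (v r - u r) := by
  classical
  have hset : {x : ℕ × ℕ | P x} =
      ↑(A.biUnion fun r => (Finset.Ico (u r) (v r)).image fun x => (r, x)) := by
    ext ⟨a, b⟩
    simp only [Set.mem_setOf_eq, Finset.coe_biUnion, Set.mem_iUnion, Finset.mem_coe,
      Finset.mem_image, Finset.mem_Ico, hP]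
    constructor
    · rintro ⟨hA, h1, h2⟩
      exact ⟨a, hA, b, ⟨h1, h2⟩, rfl⟩
    · rintro ⟨r, hr, x, hx, hxy⟩
      cases hxy
      exact ⟨hr, hx⟩
  rw [hset, Set.ncard_coe_finset]
  rw [Finset.card_biUnion]
  · exact Finset.sum_congr rfl fun r _ => by
      rw [Finset.card_image_of_injective _ (fun x y hxy => by
        simpa using congrArg Prod.snd hxy), Nat.card_Ico]
  · intro x hx y hy hxy
    simp only [Finset.disjoint_left, Finset.mem_image]
    rintro a ⟨x1, -, rfl⟩ ⟨y1, -, he⟩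
    exact hxy (by cases he; rfl)

/-- In a skew tableau `T` on `β∖γ` with positive entries, weakly decreasing along each row
and strictly decreasing down each column, condition (ST-3) — for every vertical line `c`
and every `ℓ ≥ 1`, the number of entries `ℓ+1` strictly to the left of the line is at most
the number of entries `ℓ` strictly to the left — is equivalent to (ST-3') — for every row
`R` and every `ℓ ≥ 1`, the number of entries `ℓ+1` in row `R` or below is at most the
number of entries `ℓ` strictly below row `R`. -/
theorem st3_iff_st3'
    (β γ : ℕ → ℕ) (hβ : IsPartition β) (hγ : IsPartition γ) (hγβ : ∀ r, γ r ≤ β r)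
    (T : ℕ × ℕ → ℕ)
    (hpos : ∀ r c, InSkew β γ r c → 1 ≤ T (r, c))
    (hrow : ∀ r c c', InSkew β γ r c → InSkew β γ r c' → c ≤ c' →
      T (r, c') ≤ T (r, c))
    (hcol : ∀ r r' c, InSkew β γ r c → InSkew β γ r' c → r < r' →
      T (r', c) < T (r, c)) :
    (∀ c ℓ, 1 ≤ ℓ →
        Set.ncard {b : ℕ × ℕ | InSkew β γ b.1 b.2 ∧ b.2 < c ∧ T b = ℓ + 1} ≤
          Set.ncard {b : ℕ × ℕ | InSkew β γ b.1 b.2 ∧ b.2 < c ∧ T b = ℓ}) ↔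
    (∀ R ℓ, 1 ≤ ℓ →
        Set.ncard {b : ℕ × ℕ | InSkew β γ b.1 b.2 ∧ R ≤ b.1 ∧ T b = ℓ + 1} ≤
          Set.ncard {b : ℕ × ℕ | InSkew β γ b.1 b.2 ∧ R < b.1 ∧ T b = ℓ}) := by
  classical
  obtain ⟨hβa, N, hN⟩ := hβ
  have hγa : Antitone γ := hγ.1
  have hFv : ∀ k r, N ≤ r → Fb β γ T k r = 0 := by
    intro k r hr
    have h1 := hγβ r
    have h2 := hN r hr
    have h3 : γ r = 0 := by omega
    unfold Fb
    rw [h3, h2]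
    simp
  have hstrip : ∀ k r, Fb β γ T k (r+1) ≤ Fb β γ T (k+1) r :=
    fun k r => Fb_strip hβa hγa hrow hcol k r
  have hmono : ∀ k r, Fb β γ T (k+1) r ≤ Fb β γ T k r := fun k r => Fb_mono β γ T k r
  have colcount : ∀ k c, Set.ncard {b : ℕ × ℕ | InSkew β γ b.1 b.2 ∧ b.2 < c ∧ T b = k}
      = ∑ r ∈ Finset.range N, (min (Fb β γ T k r) c - Fb β γ T (k+1) r) := by
    intro k c
    refine ncard_eq (fun x => InSkew β γ x.1 x.2 ∧ x.2 < c ∧ T x = k) (Finset.range N)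
      (fun r => Fb β γ T (k+1) r) (fun r => min (Fb β γ T k r) c) (fun a b => ?_)
    show InSkew β γ a b ∧ b < c ∧ T (a, b) = k ↔
      (a ∈ Finset.range N ∧ Fb β γ T (k+1) a ≤ b ∧ b < min (Fb β γ T k a) c)
    constructor
    · rintro ⟨hin, hbc, hT⟩
      have h1 := (eq_Fb hrow k a b).mp ⟨hin, hT⟩
      have h2 : a < N := by
        by_contra hcon
        push_neg at hcon
        have h3 := hN a hcon
        have h4 := hin.2
        omega
      refine ⟨Finset.mem_range.mpr h2, h1.1, ?_⟩
      have := h1.2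
      omega
    · rintro ⟨hA, h1, h2⟩
      have h2' : b < Fb β γ T k a ∧ b < c := by omega
      obtain ⟨hin, hT⟩ := (eq_Fb hrow k a b).mpr ⟨h1, h2'.1⟩
      exact ⟨hin, h2'.2, hT⟩
  have rowcount : ∀ k R, Set.ncard {b : ℕ × ℕ | InSkew β γ b.1 b.2 ∧ R ≤ b.1 ∧ T b = k}
      = ∑ r ∈ Finset.Ico R N, (Fb β γ T k r - Fb β γ T (k+1) r) := by
    intro k R
    refine ncard_eq (fun x => InSkew β γ x.1 x.2 ∧ R ≤ x.1 ∧ T x = k) (Finset.Ico R N)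
      (fun r => Fb β γ T (k+1) r) (fun r => Fb β γ T k r) (fun a b => ?_)
    show InSkew β γ a b ∧ R ≤ a ∧ T (a, b) = k ↔
      (a ∈ Finset.Ico R N ∧ Fb β γ T (k+1) a ≤ b ∧ b < Fb β γ T k a)
    constructor
    · rintro ⟨hin, hRa, hT⟩
      have h1 := (eq_Fb hrow k a b).mp ⟨hin, hT⟩
      have h2 : a < N := by
        by_contra hcon
        push_neg at hcon
        have h3 := hN a hcon
        have h4 := hin.2
        omega
      exact ⟨Finset.mem_Ico.mpr ⟨hRa, h2⟩, h1.1, h1.2⟩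
    · rintro ⟨hA, h1, h2⟩
      obtain ⟨hin, hT⟩ := (eq_Fb hrow k a b).mpr ⟨h1, h2⟩
      exact ⟨hin, (Finset.mem_Ico.mp hA).1, hT⟩
  constructor
  · intro h R ℓ hℓ
    have hcore := (core N (Fb β γ T (ℓ+2)) (Fb β γ T (ℓ+1)) (Fb β γ T ℓ)
        (fun r => hmono (ℓ+1) r) (fun r => hmono ℓ r) (fun r => hstrip ℓ r)
        (fun r => hstrip (ℓ+1) r) (fun r hr => hFv ℓ r hr)).mp
      (fun c => by
        have h3 := h c ℓ hℓ
        rw [colcount (ℓ+1) c, colcount ℓ c] at h3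
        exact h3) R
    have hlt : {b : ℕ × ℕ | InSkew β γ b.1 b.2 ∧ R < b.1 ∧ T b = ℓ}
        = {b : ℕ × ℕ | InSkew β γ b.1 b.2 ∧ R + 1 ≤ b.1 ∧ T b = ℓ} := rfl
    rw [rowcount (ℓ+1) R, hlt, rowcount ℓ (R+1)]
    exact hcore
  · intro h c ℓ hℓ
    have hcore := (core N (Fb β γ T (ℓ+2)) (Fb β γ T (ℓ+1)) (Fb β γ T ℓ)
        (fun r => hmono (ℓ+1) r) (fun r => hmono ℓ r) (fun r => hstrip ℓ r)
        (fun r => hstrip (ℓ+1) r) (fun r hr => hFv ℓ r hr)).mpr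
      (fun R => by
        have h3 := h R ℓ hℓ
        have hlt : {b : ℕ × ℕ | InSkew β γ b.1 b.2 ∧ R < b.1 ∧ T b = ℓ}
            = {b : ℕ × ℕ | InSkew β γ b.1 b.2 ∧ R + 1 ≤ b.1 ∧ T b = ℓ} := rfl
        rw [rowcount (ℓ+1) R, hlt, rowcount ℓ (R+1)] at h3
        exact h3) c
    rw [colcount (ℓ+1) c, colcount ℓ c]
    exact hcore
end

section
/- Let B = C_0 → C_1 → ⋯ → C_s = C be a sequence of surjective Λ-module homomorphisms f_1, …, f_s between finite length Λ-modules such that each kernel ker f_ℓ is semisimple and soc(ker(f_{ℓ+1} ∘ f_ℓ)) = ker f_ℓ for ℓ = 1, …, s−1. Then for all 1 ≤ ℓ ≤ s−1 and all j ≥ 0 with ℓ + j ≤ s, one has soc(ker(f_{ℓ+j} ∘ ⋯ ∘ f_ℓ)) = ker f_ℓ. -/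
variable {Λ : Type} [CommRing Λ] {C : ℕ → Type}
  [∀ i, AddCommGroup (C i)] [∀ i, Module Λ (C i)]

/-- The composite `C i → C (i + j)` of `j` consecutive maps of the chain `f`. -/
def chainComp (f : ∀ i, C i →ₗ[Λ] C (i + 1)) (i : ℕ) : (j : ℕ) → (C i →ₗ[Λ] C (i + j))
  | 0 => LinearMap.id
  | j + 1 => (f (i + j)).comp (chainComp f i j)

section

variable (f : ∀ i, C i →ₗ[Λ] C (i + 1))

theorem ker_chainComp_le_succ (i j : ℕ) :
    LinearMap.ker (chainComp f i j) ≤ LinearMap.ker (chainComp f i (j + 1)) := fun x hx => by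
  rw [LinearMap.mem_ker] at hx ⊢
  rw [chainComp, LinearMap.comp_apply, hx, map_zero]

variable {f} (p : Λ)

theorem ker_chainComp_succ_succ_inf_torsionBy {i j : ℕ}
    (hsoc : LinearMap.ker (chainComp f (i + j) 2) ⊓ Submodule.torsionBy Λ (C (i + j)) p =
      LinearMap.ker (f (i + j))) :
    LinearMap.ker (chainComp f i (j + 2)) ⊓ Submodule.torsionBy Λ (C i) p =
      LinearMap.ker (chainComp f i (j + 1)) ⊓ Submodule.torsionBy Λ (C i) p := by
  refine le_antisymm ?_ (inf_le_inf_right _ (ker_chainComp_le_succ f i (j + 1)))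
  intro x hx
  obtain ⟨hker, htors⟩ := Submodule.mem_inf.mp hx
  rw [Submodule.mem_torsionBy_iff] at htors
  -- `chainComp f i (j + 2)` is definitionally `chainComp f (i + j) 2 ∘ₗ chainComp f i j`.
  have hy : chainComp f i j x ∈
      LinearMap.ker (chainComp f (i + j) 2) ⊓ Submodule.torsionBy Λ (C (i + j)) p :=
    Submodule.mem_inf.mpr
      ⟨hker, (Submodule.mem_torsionBy_iff _ _).mpr (by rw [← map_smul, htors, map_zero])⟩
  rw [hsoc] at hy
  exact Submodule.mem_inf.mpr ⟨hy, (Submodule.mem_torsionBy_iff _ _).mpr htors⟩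

theorem ker_chainComp_inf_torsionBy {i : ℕ} :
    ∀ j, (∀ k < j, LinearMap.ker (chainComp f (i + k) 2) ⊓
        Submodule.torsionBy Λ (C (i + k)) p = LinearMap.ker (f (i + k))) →
      LinearMap.ker (chainComp f i (j + 1)) ⊓ Submodule.torsionBy Λ (C i) p =
        LinearMap.ker (f i) ⊓ Submodule.torsionBy Λ (C i) p
  | 0, _ => rfl
  | j + 1, hsoc => by
    rw [ker_chainComp_succ_succ_inf_torsionBy p (hsoc j j.lt_succ_self),
      ker_chainComp_inf_torsionBy j fun k hk => hsoc k (hk.trans j.lt_succ_self)]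

end

-- The paper's `f_ℓ : C_{ℓ-1} → C_ℓ` is `f (ℓ - 1)`, and `soc K` is `K ⊓ torsionBy Λ _ p`.
theorem socle_ker_chainComp_general
    (p : Λ)
    (s : ℕ) (f : ∀ i, C i →ₗ[Λ] C (i + 1))
    (hss : ∀ i, i < s → ∀ x ∈ LinearMap.ker (f i), p • x = 0)
    (hsoc : ∀ i, i + 2 ≤ s →
      LinearMap.ker (chainComp f i 2) ⊓ Submodule.torsionBy Λ (C i) p =
        LinearMap.ker (f i)) :
    ∀ i j, i + j + 1 ≤ s →
      LinearMap.ker (chainComp f i (j + 1)) ⊓ Submodule.torsionBy Λ (C i) p =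
        LinearMap.ker (f i) := by
  intro i j hij
  have hker_torsion : LinearMap.ker (f i) ≤ Submodule.torsionBy Λ (C i) p := hss i (by omega)
  rw [ker_chainComp_inf_torsionBy p j fun k hk => hsoc (i + k) (by omega),
    inf_eq_left.mpr hker_torsion]

/-- Let `B = C 0 → C 1 → ⋯ → C s = C` be a sequence of surjective `Λ`-homomorphisms
between finite length modules such that each kernel is semisimple (killed by `p`) and
`soc (ker (f_{ℓ+1} ∘ f_ℓ)) = ker f_ℓ`.  Then the socle of the kernel of any composite
`C_{ℓ-1} → C_{ℓ+j}` equals `ker f_ℓ`.  (Here the map `f_ℓ : C_{ℓ-1} → C_ℓ` of the paper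
is `f (ℓ-1)`, and `soc K = K ⊓ {x | p • x = 0}`.) -/
theorem socle_ker_chainComp
    [IsDomain Λ] [IsDiscreteValuationRing Λ] (p : Λ) (hp : Irreducible p)
    (s : ℕ) (f : ∀ i, C i →ₗ[Λ] C (i + 1))
    (hfin : ∀ i, i ≤ s → IsFiniteLength Λ (C i))
    (hsurj : ∀ i, i < s → Function.Surjective (f i))
    (hss : ∀ i, i < s → ∀ x ∈ LinearMap.ker (f i), p • x = 0)
    (hsoc : ∀ i, i + 2 ≤ s →
      LinearMap.ker (chainComp f i 2) ⊓ Submodule.torsionBy Λ (C i) p =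
        LinearMap.ker (f i)) :
    ∀ i j, i + j + 1 ≤ s →
      LinearMap.ker (chainComp f i (j + 1)) ⊓ Submodule.torsionBy Λ (C i) p =
        LinearMap.ker (f i) :=
  socle_ker_chainComp_general p s f hss hsoc
end
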